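/- For every ε ∈ {1,−1} and every ν ∈ ℂ, the deformed module Π(ε,ν) is completely reducible: every subspace of V_ε invariant under the operators H, E, F of Π(ε,ν) admits a complementary subspace that is also invariant under H, E, F. -/

import Mathlib

namespace SL2Deform

/-- The index set `ℤ_ε = {j : ℤ | (-1)^j = ε}`, for a sign `ε ∈ {1, -1}`
(i.e. a unit of `ℤ`). -/
abbrev idx (ε : ℤˣ) : Type := {j : ℤ // (-1 : ℤˣ) ^ j = ε}

/-- `V ε`: the complex vector space of finitely supported functions on `ℤ_ε`,
with standard basis `{v_j}`. -/
abbrev V (ε : ℤˣ) : Type := idx ε →₀ ℂ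

/-- The standard basis vector `v_j` of `V ε`, for `j ∈ ℤ_ε`. -/
noncomputable def bv (ε : ℤˣ) (j : ℤ) (h : (-1 : ℤˣ) ^ j = ε) : V ε :=
  Finsupp.single ⟨j, h⟩ 1

lemma parity_two : (-1 : ℤˣ) ^ (2 : ℤ) = 1 := by decide
lemma parity_neg_two : (-1 : ℤˣ) ^ (-2 : ℤ) = 1 := by decide
lemma parity_zero : (-1 : ℤˣ) ^ (0 : ℤ) = 1 := by decide

lemma parity_shift {ε : ℤˣ} {j : ℤ} (h : (-1 : ℤˣ) ^ j = ε) {s : ℤ}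
    (hs : (-1 : ℤˣ) ^ s = 1) : (-1 : ℤˣ) ^ (j + s) = ε := by
  rw [zpow_add, h, hs, mul_one]

/-- If `m ∈ ℤ_{-ε}` then `m + 1 ∈ ℤ_ε`. -/
lemma parity_succ {ε : ℤˣ} {m : ℤ} (h : (-1 : ℤˣ) ^ m = -ε) :
    (-1 : ℤˣ) ^ (m + 1) = ε := by
  rw [zpow_add, h, zpow_one]
  simp

/-- If `m ∈ ℤ_{-ε}` then `m - 1 ∈ ℤ_ε`. -/
lemma parity_pred {ε : ℤˣ} {m : ℤ} (h : (-1 : ℤˣ) ^ m = -ε) :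
    (-1 : ℤˣ) ^ (m - 1) = ε := by
  rw [sub_eq_add_neg, zpow_add, h, zpow_neg, zpow_one]
  simp

/-- The linear operator on `V ε` sending `v_j` to `c j • v_{j+s}`,
for an even shift `s`. -/
noncomputable def shiftOp (ε : ℤˣ) (s : ℤ) (hs : (-1 : ℤˣ) ^ s = 1) (c : ℤ → ℂ) :
    V ε →ₗ[ℂ] V ε :=
  Finsupp.lsum ℂ fun j =>
    LinearMap.toSpanSingleton ℂ (V ε)
      (Finsupp.single ⟨j.1 + s, parity_shift j.2 hs⟩ (c j.1))

/-- `H v_j = j • v_j`. -/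
noncomputable def Hop (ε : ℤˣ) : V ε →ₗ[ℂ] V ε :=
  shiftOp ε 0 parity_zero fun j => (j : ℂ)

/-- Principal series: `E v_j = ½(ν + j + 1) • v_{j+2}`. -/
noncomputable def Eop (ε : ℤˣ) (ν : ℂ) : V ε →ₗ[ℂ] V ε :=
  shiftOp ε 2 parity_two fun j => (1 / 2 : ℂ) * (ν + j + 1)

/-- Principal series: `F v_j = ½(ν - j + 1) • v_{j-2}`. -/
noncomputable def Fop (ε : ℤˣ) (ν : ℂ) : V ε →ₗ[ℂ] V ε :=
  shiftOp ε (-2) parity_neg_two fun j => (1 / 2 : ℂ) * (ν - j + 1)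

/-- `f_m(ν) = ½ |ν²-m²|^{1/2} (ν+m)/|ν+m|` for `ν ≠ -m`, and `f_m(-m) = 0`. -/
noncomputable def fm (m : ℤ) (ν : ℂ) : ℂ :=
  if ν = -(m : ℂ) then 0
  else (1 / 2 : ℂ) * (Real.sqrt ‖ν ^ 2 - (m : ℂ) ^ 2‖ : ℝ) * (ν + m) /
    (‖ν + (m : ℂ)‖ : ℝ)

/-- Deformed module: `E v_{m-1} = f_m(ν) • v_{m+1}`, i.e. `E v_j = f_{j+1}(ν) • v_{j+2}`. -/
noncomputable def PEop (ε : ℤˣ) (ν : ℂ) : V ε →ₗ[ℂ] V ε :=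
  shiftOp ε 2 parity_two fun j => fm (j + 1) ν

/-- Deformed module: `F v_{m+1} = f_{-m}(ν) • v_{m-1}`, i.e. `F v_j = f_{-(j-1)}(ν) • v_{j-2}`. -/
noncomputable def PFop (ε : ℤˣ) (ν : ℂ) : V ε →ₗ[ℂ] V ε :=
  shiftOp ε (-2) parity_neg_two fun j => fm (1 - j) ν

/-- The module `π'(ε,ν)`: `E v_{m-1} = ½(ν - |m|) • v_{m+1}`,
i.e. `E v_j = ½(ν - |j+1|) • v_{j+2}`. -/
noncomputable def E'op (ε : ℤˣ) (ν : ℂ) : V ε →ₗ[ℂ] V ε :=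
  shiftOp ε 2 parity_two fun j => (1 / 2 : ℂ) * (ν - ((|j + 1| : ℤ) : ℂ))

/-- The module `π'(ε,ν)`: `F v_{m+1} = ½(ν + |m|) • v_{m-1}`,
i.e. `F v_j = ½(ν + |j-1|) • v_{j-2}`. -/
noncomputable def F'op (ε : ℤˣ) (ν : ℂ) : V ε →ₗ[ℂ] V ε :=
  shiftOp ε (-2) parity_neg_two fun j => (1 / 2 : ℂ) * (ν + ((|j - 1| : ℤ) : ℂ))

/-- `ν ∈ ℤ_{-ε}`: `ν` is an integer with `(-1)^ν = -ε`. -/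
def inZminus (ε : ℤˣ) (ν : ℂ) : Prop :=
  ∃ n : ℤ, ν = (n : ℂ) ∧ (-1 : ℤˣ) ^ n = -ε

section ModuleNotions

variable {M : Type*} [AddCommGroup M] [Module ℂ M]
variable {N : Type*} [AddCommGroup N] [Module ℂ N]

/-- `W` is a submodule for the module with operators `A, B, C`: it is invariant
under all three operators. -/
def Invariant (A B C : M →ₗ[ℂ] M) (W : Submodule ℂ M) : Prop :=
  (∀ x ∈ W, A x ∈ W) ∧ (∀ x ∈ W, B x ∈ W) ∧ (∀ x ∈ W, C x ∈ W)

/-- The module with operators `A, B, C` is irreducible: its only submodules are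
`0` and the whole space. -/
def IsIrreducibleRep (A B C : M →ₗ[ℂ] M) : Prop :=
  ∀ W : Submodule ℂ M, Invariant A B C W → W = ⊥ ∨ W = ⊤

/-- `W` is an irreducible submodule: invariant, nonzero, and with no nonzero
proper invariant subspace. -/
def IsIrreducibleSubmodule (A B C : M →ₗ[ℂ] M) (W : Submodule ℂ M) : Prop :=
  Invariant A B C W ∧ W ≠ ⊥ ∧
    ∀ U : Submodule ℂ M, Invariant A B C U → U ≤ W → U = ⊥ ∨ U = W

/-- The module with operators `A, B, C` is completely reducible: every invariant
subspace has an invariant complement. -/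
def CompletelyReducible (A B C : M →ₗ[ℂ] M) : Prop :=
  ∀ W : Submodule ℂ M, Invariant A B C W →
    ∃ U : Submodule ℂ M, Invariant A B C U ∧ IsCompl W U

/-- The two modules (given by operator triples) are isomorphic. -/
def Intertwined (A B C : M →ₗ[ℂ] M) (A' B' C' : N →ₗ[ℂ] N) : Prop :=
  ∃ e : M ≃ₗ[ℂ] N, (∀ x, e (A x) = A' (e x)) ∧ (∀ x, e (B x) = B' (e x)) ∧
    (∀ x, e (C x) = C' (e x))

/-- An invariant Hermitian form for the module with operators `A, B, C`
(`A` playing the role of `H`, `B` of `E`, `C` of `F`): a sesquilinear form,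
conjugate-symmetric, with `⟨Hv,w⟩ = ⟨v,Hw⟩`, `⟨Ev,w⟩ + ⟨v,Fw⟩ = 0`,
`⟨Fv,w⟩ + ⟨v,Ew⟩ = 0`. -/
structure IsInvHermForm (A B C : M →ₗ[ℂ] M) (Φ : M → M → ℂ) : Prop where
  add_left : ∀ u v w, Φ (u + v) w = Φ u w + Φ v w
  smul_left : ∀ (a : ℂ) (v w : M), Φ (a • v) w = a * Φ v w
  conj_symm : ∀ v w, Φ w v = (starRingEnd ℂ) (Φ v w)
  inv_A : ∀ v w, Φ (A v) w = Φ v (A w)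
  inv_BC : ∀ v w, Φ (B v) w + Φ v (C w) = 0
  inv_CB : ∀ v w, Φ (C v) w + Φ v (B w) = 0

end ModuleNotions

/-- `span{v_j : j ≥ n}`. -/
noncomputable def spanGE (ε : ℤˣ) (n : ℤ) : Submodule ℂ (V ε) :=
  Submodule.span ℂ {x : V ε | ∃ j : idx ε, n ≤ j.1 ∧ x = Finsupp.single j 1}

/-- `span{v_j : j ≤ n}`. -/
noncomputable def spanLE (ε : ℤˣ) (n : ℤ) : Submodule ℂ (V ε) :=
  Submodule.span ℂ {x : V ε | ∃ j : idx ε, j.1 ≤ n ∧ x = Finsupp.single j 1}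

/-- `span{v_j : |j| ≤ n}`. -/
noncomputable def spanAbsLE (ε : ℤˣ) (n : ℤ) : Submodule ℂ (V ε) :=
  Submodule.span ℂ {x : V ε | ∃ j : idx ε, |j.1| ≤ n ∧ x = Finsupp.single j 1}

/-- The diagonal operator `S v_j = c j • v_j`. -/
noncomputable def diagMap (ε : ℤˣ) (c : idx ε → ℂ) : V ε →ₗ[ℂ] V ε :=
  Finsupp.lsum ℂ fun j => LinearMap.toSpanSingleton ℂ (V ε) (Finsupp.single j (c j))

/-!
`H` is diagonal with distinct eigenvalues, so every invariant subspace `W` is spanned by the basis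
vectors `v_j` it contains, and the span of the remaining `v_j` is a complement. That complement is
`H`-stable, and it is `E`-stable because `f_m(ν) = 0` exactly when `ν² = m²`: if `E v_j ≠ 0`, then
`F v_{j+2}` is a nonzero multiple of `v_j`, so `v_{j+2} ∈ W` would force `v_j ∈ W`. Exchanging the
roles of `E` and `F` gives `F`-stability.
-/

section CoordinateSubspace

variable {K ι : Type*} [Field K]

theorem supported_setOf_single_mem_le (W : Submodule K (ι →₀ K)) :
    Finsupp.supported K K {i | Finsupp.single i 1 ∈ W} ≤ W := by
  rw [Finsupp.supported_eq_span_single, Submodule.span_le]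
  rintro _ ⟨i, hi, rfl⟩
  exact hi

theorem eq_supported_of_diagonal_invariant {T : (ι →₀ K) →ₗ[K] ι →₀ K} {d : ι → K}
    (hd : Function.Injective d) (hT : ∀ x i, T x i = d i * x i) {W : Submodule K (ι →₀ K)}
    (hW : ∀ x ∈ W, T x ∈ W) : W = Finsupp.supported K K {i | Finsupp.single i 1 ∈ W} := by
  classical
  set S := {i | Finsupp.single i (1 : K) ∈ W}
  refine le_antisymm (fun x hx => ?_) (supported_setOf_single_mem_le W)
  suffices key : ∀ s : Finset ι, ∀ x ∈ W, x.support ⊆ s → x ∈ Finsupp.supported K K S from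
    key x.support x hx subset_rfl
  intro s
  induction s using Finset.induction_on with
  | empty =>
    intro x _ hx
    rw [Finsupp.support_eq_empty.mp (Finset.subset_empty.mp hx)]
    exact zero_mem _
  | insert a s _ ih =>
    intro x hxW hxs
    -- `T - d a` kills the `a`-component and rescales the others by the nonzero `d i - d a`.
    set y := T x - d a • x
    have hy_apply : ∀ i, y i = (d i - d a) * x i := fun i => by
      simp only [y, Finsupp.sub_apply, Finsupp.smul_apply, hT, smul_eq_mul]
      ring
    have hyW : y ∈ W := W.sub_mem (hW x hxW) (W.smul_mem _ hxW)
    have hy_supp : y.support ⊆ s := fun i hi => by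
      have hi' : (d i - d a) * x i ≠ 0 := by rwa [← hy_apply, ← Finsupp.mem_support_iff]
      have hia : i ≠ a := fun h => hi' (by rw [h, sub_self, zero_mul])
      have hix : i ∈ x.support := Finsupp.mem_support_iff.mpr (right_ne_zero_of_mul hi')
      exact (Finset.mem_insert.mp (hxs hix)).resolve_left hia
    have hyS := (Finsupp.mem_supported K y).mp (ih y hyW hy_supp)
    have h_erase : x.erase a ∈ Finsupp.supported K K S := by
      refine (Finsupp.mem_supported K _).mpr fun i hi => hyS ?_
      have hia : i ≠ a := by rintro rfl; simp at hi
      rw [Finset.mem_coe, Finsupp.mem_support_iff, Finsupp.erase_ne hia] at hi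
      rw [Finset.mem_coe, Finsupp.mem_support_iff, hy_apply]
      exact mul_ne_zero (sub_ne_zero.mpr (hd.ne hia)) hi
    have h_single : Finsupp.single a (x a) ∈ Finsupp.supported K K S := by
      by_cases hxa : x a = 0
      · rw [hxa, Finsupp.single_zero]
        exact zero_mem _
      refine Finsupp.single_mem_supported K _ ?_
      have hmem : Finsupp.single a (x a) ∈ W := by
        rw [← sub_eq_of_eq_add (Finsupp.single_add_erase a x).symm]
        exact W.sub_mem hxW (supported_setOf_single_mem_le W h_erase)
      simpa [S, Finsupp.smul_single, hxa] using W.smul_mem (x a)⁻¹ hmem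
    rw [← Finsupp.single_add_erase a x]
    exact add_mem h_single h_erase

theorem diagonal_mem_supported {H : (ι →₀ K) →ₗ[K] ι →₀ K} {d : ι → K}
    (hH : ∀ x i, H x i = d i * x i) {S : Set ι} :
    ∀ x ∈ Finsupp.supported K K S, H x ∈ Finsupp.supported K K S := by
  intro x hx
  refine (Finsupp.mem_supported K _).mpr fun i hi => (Finsupp.mem_supported K x).mp hx ?_
  rw [Finset.mem_coe, Finsupp.mem_support_iff, hH] at hi
  exact Finsupp.mem_support_iff.mpr (right_ne_zero_of_mul hi)

theorem supported_invariant_of_single {S : Set ι} {A : (ι →₀ K) →ₗ[K] ι →₀ K}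
    (h : ∀ i ∈ S, A (Finsupp.single i 1) ∈ Finsupp.supported K K S) :
    ∀ x ∈ Finsupp.supported K K S, A x ∈ Finsupp.supported K K S := by
  intro x hx
  rw [Finsupp.supported_eq_span_single] at hx
  refine Submodule.span_induction ?_ (by simp) (fun _ _ _ _ => by simpa using add_mem)
    (fun a _ _ => by simpa using Submodule.smul_mem _ a) hx
  rintro _ ⟨i, hi, rfl⟩
  exact h i hi

end CoordinateSubspace

theorem completelyReducible_of_diagonal {ι : Type*} {H E F : (ι →₀ ℂ) →ₗ[ℂ] ι →₀ ℂ}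
    {d : ι → ℂ} (hd : Function.Injective d) (hH : ∀ x i, H x i = d i * x i)
    (hcompl : ∀ S : Set ι, Invariant H E F (Finsupp.supported ℂ ℂ S) →
      (∀ x ∈ Finsupp.supported ℂ ℂ Sᶜ, E x ∈ Finsupp.supported ℂ ℂ Sᶜ) ∧
        ∀ x ∈ Finsupp.supported ℂ ℂ Sᶜ, F x ∈ Finsupp.supported ℂ ℂ Sᶜ) :
    CompletelyReducible H E F := by
  intro W hW
  have hW_eq := eq_supported_of_diagonal_invariant hd hH hW.1
  rw [hW_eq] at hW ⊢
  exact ⟨_, ⟨diagonal_mem_supported hH, hcompl _ hW⟩,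
    Finsupp.disjoint_supported_supported isCompl_compl.disjoint,
    Finsupp.codisjoint_supported_supported isCompl_compl.codisjoint⟩

lemma shiftOp_single (ε : ℤˣ) (s : ℤ) (hs : (-1 : ℤˣ) ^ s = 1) (c : ℤ → ℂ)
    (j : idx ε) (a : ℂ) :
    shiftOp ε s hs c (Finsupp.single j a) =
      Finsupp.single ⟨j.1 + s, parity_shift j.2 hs⟩ (a * c j.1) := by
  simp [shiftOp]

lemma Hop_apply (ε : ℤˣ) (x : V ε) (k : idx ε) : Hop ε x k = k.1 * x k := by
  induction x using Finsupp.induction_linear with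
  | zero => simp
  | add f g hf hg => rw [map_add, Finsupp.add_apply, hf, hg, Finsupp.add_apply, mul_add]
  | single j a =>
    have hj : (⟨j.1 + 0, parity_shift j.2 parity_zero⟩ : idx ε) = j := Subtype.ext (add_zero _)
    rw [Hop, shiftOp_single, hj]
    rcases eq_or_ne j k with rfl | h
    · simp [mul_comm]
    · simp [h]

theorem shiftOp_mem_supported_compl {ε : ℤˣ} {s t : ℤ} (hs : (-1 : ℤˣ) ^ s = 1)
    (ht : (-1 : ℤˣ) ^ t = 1) (hst : s + t = 0) {c c' : ℤ → ℂ}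
    (hc : ∀ j, c j ≠ 0 → c' (j + s) ≠ 0) {S : Set (idx ε)}
    (hS : ∀ x ∈ Finsupp.supported ℂ ℂ S, shiftOp ε t ht c' x ∈ Finsupp.supported ℂ ℂ S) :
    ∀ x ∈ Finsupp.supported ℂ ℂ Sᶜ, shiftOp ε s hs c x ∈ Finsupp.supported ℂ ℂ Sᶜ := by
  refine supported_invariant_of_single fun j hj => ?_
  rw [shiftOp_single, one_mul]
  by_cases hcj : c j.1 = 0
  · rw [hcj, Finsupp.single_zero]
    exact zero_mem _
  refine Finsupp.single_mem_supported ℂ _ fun hjs => hj ?_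
  -- the backward shift returns `v_{j+s}` to a nonzero multiple of `v_j`
  have hback := hS _ (Finsupp.single_mem_supported ℂ 1 hjs)
  have hidx : (⟨j.1 + s + t, parity_shift (parity_shift j.2 hs) ht⟩ : idx ε) = j :=
    Subtype.ext (show j.1 + s + t = j.1 by rw [add_assoc, hst, add_zero])
  rw [shiftOp_single, one_mul, hidx, Finsupp.mem_supported,
    Finsupp.support_single _ (hc _ hcj)] at hback
  simpa using hback

lemma fm_eq_zero_iff (m : ℤ) (ν : ℂ) : fm m ν = 0 ↔ ν ^ 2 = (m : ℂ) ^ 2 := by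
  unfold fm
  split_ifs with h
  · rw [h]
    exact ⟨fun _ => by ring, fun _ => rfl⟩
  · have hb : ν + (m : ℂ) ≠ 0 := fun hc => h (by linear_combination hc)
    simp [hb, sub_eq_zero]

lemma fm_neg_eq_zero_iff (m : ℤ) (ν : ℂ) : fm (-m) ν = 0 ↔ fm m ν = 0 := by
  rw [fm_eq_zero_iff, fm_eq_zero_iff, Int.cast_neg, neg_sq]

/-- For every `ε ∈ {1,-1}` and every `ν ∈ ℂ`, the deformed module
`Π(ε,ν)` is completely reducible: every subspace of `V ε` invariant under `H, E, F`
admits a complementary subspace that is also invariant under `H, E, F`. -/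
theorem deformed_completely_reducible (ε : ℤˣ) (ν : ℂ) :
    CompletelyReducible (Hop ε) (PEop ε ν) (PFop ε ν) := by
  refine completelyReducible_of_diagonal (d := fun k : idx ε => (k.1 : ℂ))
    (fun a b h => Subtype.ext (Int.cast_injective h)) (Hop_apply ε) fun S hS => ⟨?_, ?_⟩
  · refine shiftOp_mem_supported_compl _ parity_neg_two (by norm_num) (fun j hj => ?_) hS.2.2
    rwa [show 1 - (j + 2) = -(j + 1) by ring, Ne, fm_neg_eq_zero_iff]
  · refine shiftOp_mem_supported_compl _ parity_two (by norm_num) (fun j hj => ?_) hS.2.1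
    rwa [show j + -2 + 1 = -(1 - j) by ring, Ne, fm_neg_eq_zero_iff]
end SL2Deform
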